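/- Let m,n ≥ 3, let Λ be the m×n torus lattice, and let J^x = (J^x_p ≥ 0 : p ∈ F), J^z = (J^z_s ≥ 0 : s ∈ V) be nonnegative couplings. For any C ⊆ F, the toric code equilibrium state satisfies ⟨∏_{p∈C} X_p⟩ = (∏_{p∈F∖C} cosh(J^x_p) ∏_{p∈C} sinh(J^x_p) + ∏_{p∈F∖C} sinh(J^x_p) ∏_{p∈C} cosh(J^x_p)) / (∏_{p∈F} cosh(J^x_p) + ∏_{p∈F} sinh(J^x_p)). In particular this expectation is nonnegative. -/

import Mathlib

open scoped BigOperators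

namespace Toric

/-- Vertices of the `m × n` torus lattice. Faces are also indexed by `Vtx`
(the face `p` is the unit square whose lower-left corner is `p`). -/
abbrev Vtx (m n : ℕ) := ZMod m × ZMod n

/-- Edges of the torus: `(s, true)` is the horizontal edge from `s` to its right
neighbour, `(s, false)` the vertical edge from `s` to its upper neighbour. -/
abbrev Edge (m n : ℕ) := Vtx m n × Bool

variable (m n : ℕ)

/-- The four edges incident to the vertex `s`, in a fixed order:
right, up, left, down. -/
def star (s : Vtx m n) : Fin 4 → Edge m n :=
  ![(s, true), (s, false), ((s.1 - 1, s.2), true), ((s.1, s.2 - 1), false)]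

/-- The four edges bounding the face `p`, in a fixed order:
bottom, left, top, right. -/
def faceEdge (p : Vtx m n) : Fin 4 → Edge m n :=
  ![(p, true), (p, false), ((p.1, p.2 + 1), true), ((p.1 + 1, p.2), false)]

/-- The set of the four edges incident to the vertex `s` (written `e ∼ s`). -/
def starSet (s : Vtx m n) : Finset (Edge m n) := Finset.univ.image (star m n s)

/-- The set of the four edges bounding the face `p` (written `e ∼ p`). -/
def faceSet (p : Vtx m n) : Finset (Edge m n) := Finset.univ.image (faceEdge m n p)

/-- Arrow configurations: each edge points right/up (`true`) or left/down (`false`). -/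
abbrev AConf (m n : ℕ) := Edge m n → Bool

/-- Which of the four edges at `s` are incoming (point towards `s`). -/
def incVec (d : AConf m n) (s : Vtx m n) : Fin 4 → Bool :=
  ![!d (star m n s 0), !d (star m n s 1), d (star m n s 2), d (star m n s 3)]

/-- Eight-vertex condition: every vertex has an even number of incoming arrows. -/
def IsEightVertex (d : AConf m n) : Prop :=
  ∀ s : Vtx m n, Even (Finset.univ.filter (fun i => incVec m n d s i = true)).card

/-- A local vertex type `η : Fin 4 → Bool` (arrow directions of the four incident
edges, in the order right, up, left, down) is one of the eight allowed vertex types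
I–VIII iff the number of incoming arrows is even. -/
def IsVertexType (η : Fin 4 → Bool) : Prop :=
  Even (Finset.univ.filter
    (fun i => (![!η 0, !η 1, η 2, η 3] : Fin 4 → Bool) i = true)).card

/-- The event `A^η_C` that every vertex of `C` exhibits the type `η` or its
total reversal. -/
def EventA (η : Fin 4 → Bool) (C : Finset (Vtx m n)) (d : AConf m n) : Prop :=
  ∀ s ∈ C, (∀ i, d (star m n s i) = η i) ∨ (∀ i, d (star m n s i) = !η i)

/-- The event `A^{η,ν}_C` that every vertex of `C` exhibits the type `η` or `ν`
or one of their total reversals. -/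
def EventA2 (η ν : Fin 4 → Bool) (C : Finset (Vtx m n)) (d : AConf m n) : Prop :=
  ∀ s ∈ C, (∀ i, d (star m n s i) = η i) ∨ (∀ i, d (star m n s i) = !η i) ∨
    (∀ i, d (star m n s i) = ν i) ∨ (∀ i, d (star m n s i) = !ν i)

/-- A non-contractible cycle of vertices of `C`: a cyclic sequence of vertices of `C`
whose consecutive vertices are nearest neighbours on the torus (with the actual
`ℤ²`-valued unit steps recorded), and whose winding number (the total displacement
in `ℤ²`) is nonzero. -/
structure NCCycle (C : Set (Vtx m n)) where
  len : ℕ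
  len_pos : 0 < len
  v : ℕ → Vtx m n
  step : ℕ → ℤ × ℤ
  mem : ∀ i < len, v i ∈ C
  unit : ∀ i < len,
    step i = (1, 0) ∨ step i = (-1, 0) ∨ step i = (0, 1) ∨ step i = (0, -1)
  succ : ∀ i < len,
    v (i + 1) = ((v i).1 + ((step i).1 : ZMod m), (v i).2 + ((step i).2 : ZMod n))
  closed : v len = v 0
  winding : ∑ i ∈ Finset.range len, step i ≠ 0

/-- Hypothesis (★): either `C` contains no non-contractible cycle, or every
non-contractible cycle in `C` has even length. -/
def StarHyp (C : Set (Vtx m n)) : Prop :=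
  IsEmpty (NCCycle m n C) ∨ ∀ γ : NCCycle m n C, Even γ.len

section torusProb
variable [NeZero m] [NeZero n]

/-- The set `Δ_8vx` of eight-vertex configurations on the torus. -/
noncomputable def Δ8 : Finset (AConf m n) :=
  haveI := Classical.decPred (IsEightVertex m n)
  Finset.univ.filter (IsEightVertex m n)

/-- The uniform eight-vertex probability measure `μ`. -/
noncomputable def prob (P : AConf m n → Prop) : ℝ :=
  haveI := Classical.decPred P
  (((Δ8 m n).filter P).card : ℝ) / ((Δ8 m n).card : ℝ)

end torusProb

/-- Spin configurations `Ω = {-1,+1}^E`. -/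
abbrev SConf (m n : ℕ) := Edge m n → ℤˣ

section matrices
variable [NeZero m] [NeZero n]

/-- Real matrices indexed by the spin configurations (i.e. operators expressed in
the `σ³` product basis). -/
abbrev Mat (m n : ℕ) [NeZero m] [NeZero n] := Matrix (SConf m n) (SConf m n) ℝ

/-- The spin configuration `x^p`, equal to `-1` exactly on the edges of the face `p`. -/
def xconf (p : Vtx m n) : SConf m n := fun e => if e ∈ faceSet m n p then -1 else 1

/-- The spin configuration equal to `-1` exactly on the edges of a set `A`. -/
def aconf (A : Finset (Edge m n)) : SConf m n := fun e => if e ∈ A then -1 else 1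

/-- The plaquette operator `X_p = ∏_{e ∼ p} σ¹_e`: the permutation matrix flipping
the spins on the four edges of `p`. -/
def X (p : Vtx m n) : Mat m n := fun τ ω => if τ = xconf m n p * ω then 1 else 0

/-- `X_A = ∏_{e ∈ A} σ¹_e`: the permutation matrix flipping the spins on `A`. -/
def XA (A : Finset (Edge m n)) : Mat m n := fun τ ω => if τ = aconf m n A * ω then 1 else 0

/-- The product `∏_{p ∈ C} X_p` of plaquette operators: the permutation matrix
flipping the spins around all faces of `C`. -/
def XProd (C : Finset (Vtx m n)) : Mat m n :=
  fun τ ω => if τ = (∏ p ∈ C, xconf m n p) * ω then 1 else 0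

/-- The star operator `Z_s = ∏_{e ∼ s} σ³_e` (a diagonal matrix). -/
def Z (s : Vtx m n) : Mat m n :=
  Matrix.diagonal fun ω => (((∏ e ∈ starSet m n s, ω e : ℤˣ) : ℤ) : ℝ)

/-- `Z_A = ∏_{e ∈ A} σ³_e` (a diagonal matrix). -/
def ZA (A : Finset (Edge m n)) : Mat m n :=
  Matrix.diagonal fun ω => (((∏ e ∈ A, ω e : ℤˣ) : ℤ) : ℝ)

/-- The product `∏_{s ∈ D} Z_s` of star operators (a diagonal matrix). -/
def ZProd (D : Finset (Vtx m n)) : Mat m n :=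
  Matrix.diagonal fun ω => (((∏ s ∈ D, ∏ e ∈ starSet m n s, ω e : ℤˣ) : ℤ) : ℝ)

/-- The toric code Hamiltonian `H = -∑_p Jˣ_p X_p - ∑_s Jᶻ_s Z_s`. -/
noncomputable def H (Jx Jz : Vtx m n → ℝ) : Mat m n :=
  -∑ p : Vtx m n, Jx p • X m n p - ∑ s : Vtx m n, Jz s • Z m n s

/-- Matrix exponential. -/
noncomputable def mexp (A : Mat m n) : Mat m n := NormedSpace.exp A

/-- The equilibrium state `⟨A⟩ = tr(A e^{-H}) / tr(e^{-H})`. -/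
noncomputable def gibbs (Jx Jz : Vtx m n → ℝ) (A : Mat m n) : ℝ :=
  (A * mexp m n (-H m n Jx Jz)).trace / (mexp m n (-H m n Jx Jz)).trace

end matrices

/-- The scalar `I^ε_s(σ) = (1/16) ∏_{i=1}^4 (1 + ε_i σ_i(s))`. -/
noncomputable def Ifun (ε : Fin 4 → ℤˣ) (s : Vtx m n) (σ : SConf m n) : ℝ :=
  (1 / 16 : ℝ) * ∏ i : Fin 4, (1 + ((ε i : ℤ) : ℝ) * ((σ (star m n s i) : ℤ) : ℝ))

/-- The scalar `Ī^ε_s(σ) = (1/16) ∏_{i=1}^4 (1 - ε_i σ_i(s))`. -/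
noncomputable def Ibar (ε : Fin 4 → ℤˣ) (s : Vtx m n) (σ : SConf m n) : ℝ :=
  (1 / 16 : ℝ) * ∏ i : Fin 4, (1 - ((ε i : ℤ) : ℝ) * ((σ (star m n s i) : ℤ) : ℝ))

/-- `I^ε_C(σ) = ∏_{s ∈ C} (I^ε_s(σ) + Ī^ε_s(σ))`: the indicator that around every
vertex of `C` the spins all agree with `ε` or are all opposite. -/
noncomputable def IC (ε : Fin 4 → ℤˣ) (C : Finset (Vtx m n)) (σ : SConf m n) : ℝ :=
  ∏ s ∈ C, (Ifun m n ε s σ + Ibar m n ε s σ)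

/-- `I^{ε,δ}_C(σ) = ∏_{s ∈ C} (I^ε_s(σ) + Ī^ε_s(σ) + I^δ_s(σ) + Ī^δ_s(σ))`. -/
noncomputable def IC2 (ε δ : Fin 4 → ℤˣ) (C : Finset (Vtx m n)) (σ : SConf m n) : ℝ :=
  ∏ s ∈ C, (Ifun m n ε s σ + Ibar m n ε s σ + Ifun m n δ s σ + Ibar m n δ s σ)

section matrices2
variable [NeZero m] [NeZero n]

/-- The (diagonal) operator `Q^ε_C = ∏_{s ∈ C} (P^ε_s + P̄^ε_s)`, where
`P^ε_s = (1/16) ∏_i (1 + ε_i σ³_i(s))` and `P̄^ε_s = (1/16) ∏_i (1 - ε_i σ³_i(s))`. -/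
noncomputable def Q (ε : Fin 4 → ℤˣ) (C : Finset (Vtx m n)) : Mat m n :=
  Matrix.diagonal (IC m n ε C)

/-- The (diagonal) operator `Q^{ε,δ}_C = ∏_{s ∈ C} (P^ε_s + P̄^ε_s + P^δ_s + P̄^δ_s)`. -/
noncomputable def Q2 (ε δ : Fin 4 → ℤˣ) (C : Finset (Vtx m n)) : Mat m n :=
  Matrix.diagonal (IC2 m n ε δ C)

/-- Expectation `E_J[f]` under the four-body Ising measure
`P_J(σ) ∝ exp(∑_s J_s ∏_{e ∼ s} σ_e)`. -/
noncomputable def isingE (J : Vtx m n → ℝ) (f : SConf m n → ℝ) : ℝ :=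
  (∑ σ : SConf m n, f σ *
      Real.exp (∑ s : Vtx m n, J s * (((∏ e ∈ starSet m n s, σ e : ℤˣ) : ℤ) : ℝ))) /
    (∑ σ : SConf m n,
      Real.exp (∑ s : Vtx m n, J s * (((∏ e ∈ starSet m n s, σ e : ℤˣ) : ℤ) : ℝ)))

end matrices2

end Toric

/-!
The plaquette operators `X_p` commute with each other and with the star operators `Z_s`, since a
face and a star share zero or two edges. Hence `e^{-H}` is `∏_p (cosh Jˣ_p + sinh Jˣ_p X_p)` times
the diagonal matrix `e^{∑_s Jᶻ_s Z_s}`, and expanding the product gives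
`∑_{A ⊆ F} (∏_{p ∈ A} sinh Jˣ_p ∏_{p ∉ A} cosh Jˣ_p) X_A`. A spin flip has nonzero trace against a
diagonal matrix only if it is the identity, and `X_C X_A = X_{C ∆ A}` is the identity exactly when
`C ∆ A` is `∅` or `F`: flipping a set of faces fixes every edge only if each edge has both or
neither of its two faces in the set. The diagonal factor contributes the same classical partition
function to numerator and denominator.
-/

open NormedSpace

section Involution

variable {𝔸 : Type*} [Ring 𝔸] [Algebra ℝ 𝔸] [TopologicalSpace 𝔸] [IsTopologicalRing 𝔸]
  [T2Space 𝔸] [ContinuousSMul ℝ 𝔸]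

theorem exp_smul_of_mul_self_eq_one {a : 𝔸} (ha : a * a = 1) (c : ℝ) :
    exp (c • a) = Real.cosh c • (1 : 𝔸) + Real.sinh c • a := by
  have hpow : ∀ k, a ^ (2 * k) = 1 := fun k => by rw [pow_mul, sq, ha, one_pow]
  rw [exp_eq_tsum ℝ]
  refine HasSum.tsum_eq (HasSum.even_add_odd ?_ ?_)
  · convert (Real.hasSum_cosh c).smul_const (1 : 𝔸) using 2 with k
    rw [smul_pow, hpow, smul_smul, div_eq_inv_mul]
  · convert (Real.hasSum_sinh c).smul_const a using 2 with k
    rw [smul_pow, pow_succ a, hpow, one_mul, smul_smul, div_eq_inv_mul]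

end Involution

section ShiftMatrix

variable {G R : Type*} [DecidableEq G] [Semiring R]

variable (R) in
/-- `Toric.X m n p` and `Toric.XProd m n C` are, by definition, `shiftMatrix ℝ` of `xconf m n p`
and of `∏ p ∈ C, xconf m n p`. -/
def shiftMatrix [Mul G] (g : G) : Matrix G G R := fun τ ω => if τ = g * ω then 1 else 0

variable [Group G]

theorem shiftMatrix_one : shiftMatrix R (1 : G) = 1 := by
  ext τ ω
  simp [shiftMatrix, Matrix.one_apply]

variable [Fintype G]

theorem shiftMatrix_mul (g h : G) :
    shiftMatrix R g * shiftMatrix R h = shiftMatrix R (g * h) := by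
  ext τ ω
  simp [shiftMatrix, Matrix.mul_apply, mul_assoc]

theorem commute_shiftMatrix_diagonal {g : G} {d : G → R} (hd : ∀ ω, d (g * ω) = d ω) :
    Commute (shiftMatrix R g) (Matrix.diagonal d) := by
  ext τ ω
  simp only [Matrix.mul_diagonal, Matrix.diagonal_mul, shiftMatrix]
  split_ifs with h <;> simp [h, hd]

theorem trace_shiftMatrix_mul_diagonal (g : G) (d : G → R) :
    (shiftMatrix R g * Matrix.diagonal d).trace = if g = 1 then ∑ τ, d τ else 0 := by
  split_ifs with hg
  · simp [hg, shiftMatrix_one]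
  · refine Finset.sum_eq_zero fun τ _ => ?_
    simp [Matrix.mul_diagonal, shiftMatrix, hg]

end ShiftMatrix

section CommShiftMatrix

variable {G : Type*} [CommGroup G] [Fintype G] [DecidableEq G]

theorem commute_shiftMatrix {R : Type*} [Semiring R] (g h : G) :
    Commute (shiftMatrix R g) (shiftMatrix R h) := by
  rw [Commute, SemiconjBy, shiftMatrix_mul, shiftMatrix_mul, mul_comm]

theorem exp_sum_smul_shiftMatrix {ι : Type*} [DecidableEq ι] {x : ι → G}
    (hx : ∀ i, x i * x i = 1) (J : ι → ℝ) (s : Finset ι) :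
    exp (∑ i ∈ s, J i • shiftMatrix ℝ (x i)) =
      ∑ A ∈ s.powerset, ((∏ i ∈ A, Real.sinh (J i)) * ∏ i ∈ s \ A, Real.cosh (J i)) •
        shiftMatrix ℝ (∏ i ∈ A, x i) := by
  induction s using Finset.induction_on with
  | empty => simp [shiftMatrix_one]
  | insert a s ha ih =>
    have hcomm : Commute (J a • shiftMatrix ℝ (x a)) (∑ i ∈ s, J i • shiftMatrix ℝ (x i)) :=
      Commute.sum_right _ _ _ fun i _ =>
        ((commute_shiftMatrix _ _).smul_left _).smul_right _
    rw [Finset.sum_insert ha, Matrix.exp_add_of_commute _ _ hcomm,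
      exp_smul_of_mul_self_eq_one (by rw [shiftMatrix_mul, hx, shiftMatrix_one]), ih,
      Finset.sum_powerset_insert ha, add_mul, Finset.mul_sum, Finset.mul_sum]
    congr 1 <;> refine Finset.sum_congr rfl fun A hA => ?_
    · have haA : a ∉ A := fun h => ha (Finset.mem_powerset.mp hA h)
      rw [Finset.insert_sdiff_of_notMem _ haA,
        Finset.prod_insert (fun h => ha (Finset.mem_sdiff.mp h).1), Matrix.smul_mul, one_mul,
        smul_smul, mul_left_comm]
    · have haA : a ∉ A := fun h => ha (Finset.mem_powerset.mp hA h)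
      rw [Finset.prod_insert haA, Finset.prod_insert haA, Finset.insert_sdiff_insert,
        Finset.sdiff_insert_of_notMem ha, Matrix.smul_mul, Matrix.mul_smul, smul_smul,
        shiftMatrix_mul, mul_assoc]

end CommShiftMatrix

theorem Finset.prod_mul_prod_eq_prod_symmDiff {ι G : Type*} [DecidableEq ι] [CommGroup G]
    {f : ι → G} (hf : ∀ i, f i * f i = 1) (s t : Finset ι) :
    (∏ i ∈ s, f i) * ∏ i ∈ t, f i = ∏ i ∈ symmDiff s t, f i := by
  have hunion : s ∪ t = symmDiff s t ∪ s ∩ t := (symmDiff_sup_inf s t).symm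
  rw [← Finset.prod_union_inter, hunion,
    Finset.prod_union (s₁ := symmDiff s t) (s₂ := s ∩ t) (disjoint_symmDiff_inf s t), mul_assoc,
    ← Finset.prod_mul_distrib, Finset.prod_congr rfl fun i _ => hf i, Finset.prod_const_one,
    mul_one]

theorem ZMod.eq_univ_of_forall_add_mem {m n : ℕ} [NeZero m] [NeZero n]
    {A : Finset (ZMod m × ZMod n)} (hA : A.Nonempty)
    (h₁ : ∀ v ∈ A, v + (1, 0) ∈ A) (h₂ : ∀ v ∈ A, v + (0, 1) ∈ A) : A = Finset.univ := by
  have hiter : ∀ x : ZMod m × ZMod n, (∀ v ∈ A, v + x ∈ A) →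
      ∀ k : ℕ, ∀ v ∈ A, v + k • x ∈ A := by
    intro x hx k
    induction k with
    | zero => simp
    | succ k ih => exact fun v hv => by rw [succ_nsmul, ← add_assoc]; exact hx _ (ih v hv)
  obtain ⟨v, hv⟩ := hA
  refine Finset.eq_univ_of_forall fun q => ?_
  have := hiter _ h₂ (q - v).2.val _ (hiter _ h₁ (q - v).1.val v hv)
  convert this using 1
  ext <;> simp

theorem ite_neg_one_mul_ite_neg_one_eq_one_iff (P Q : Prop) [Decidable P] [Decidable Q] :
    ((if P then -1 else 1 : ℤˣ) * (if Q then -1 else 1) = 1 ↔ (P ↔ Q)) := by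
  split_ifs <;> simp_all [Units.ext_iff]

namespace Toric

variable {m n : ℕ}

theorem mem_faceSet_horizontal (p : Vtx m n) (a : ZMod m) (b : ZMod n) :
    ((a, b), true) ∈ faceSet m n p ↔ p = (a, b) ∨ p = (a, b - 1) := by
  simp [faceSet, faceEdge, Fin.exists_fin_succ, Prod.ext_iff, eq_sub_iff_add_eq]

theorem mem_faceSet_vertical (p : Vtx m n) (a : ZMod m) (b : ZMod n) :
    ((a, b), false) ∈ faceSet m n p ↔ p = (a, b) ∨ p = (a - 1, b) := by
  simp [faceSet, faceEdge, Fin.exists_fin_succ, Prod.ext_iff, eq_sub_iff_add_eq]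

theorem xconf_mul_self (p : Vtx m n) : xconf m n p * xconf m n p = 1 :=
  funext fun _ => Int.units_mul_self _

theorem prod_xconf_horizontal (hn : 1 < n) (A : Finset (Vtx m n)) (a : ZMod m) (b : ZMod n) :
    (∏ p ∈ A, xconf m n p) ((a, b), true) =
      (if (a, b) ∈ A then -1 else 1) * (if (a, b - 1) ∈ A then -1 else 1) := by
  have hsplit : ∀ p, xconf m n p ((a, b), true) =
      (if p = (a, b) then -1 else 1) * (if p = (a, b - 1) then -1 else 1) := by
    have : Fact (1 < n) := ⟨hn⟩
    intro p
    simp only [xconf, mem_faceSet_horizontal]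
    split_ifs <;> simp_all [eq_sub_iff_add_eq]
  rw [Finset.prod_apply, Finset.prod_congr rfl fun p _ => hsplit p, Finset.prod_mul_distrib,
    Finset.prod_ite_eq', Finset.prod_ite_eq']

theorem prod_xconf_vertical (hm : 1 < m) (A : Finset (Vtx m n)) (a : ZMod m) (b : ZMod n) :
    (∏ p ∈ A, xconf m n p) ((a, b), false) =
      (if (a, b) ∈ A then -1 else 1) * (if (a - 1, b) ∈ A then -1 else 1) := by
  have hsplit : ∀ p, xconf m n p ((a, b), false) =
      (if p = (a, b) then -1 else 1) * (if p = (a - 1, b) then -1 else 1) := by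
    have : Fact (1 < m) := ⟨hm⟩
    intro p
    simp only [xconf, mem_faceSet_vertical]
    split_ifs <;> simp_all [eq_sub_iff_add_eq]
  rw [Finset.prod_apply, Finset.prod_congr rfl fun p _ => hsplit p, Finset.prod_mul_distrib,
    Finset.prod_ite_eq', Finset.prod_ite_eq']

theorem star_injective (hm : 1 < m) (hn : 1 < n) (s : Vtx m n) :
    Function.Injective (star m n s) := by
  have : Fact (1 < m) := ⟨hm⟩
  have : Fact (1 < n) := ⟨hn⟩
  intro i j hij
  fin_cases i <;> fin_cases j <;> simp_all [star, Prod.ext_iff, eq_sub_iff_add_eq]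

theorem prod_starSet_prod_xconf (hm : 1 < m) (hn : 1 < n) (A : Finset (Vtx m n)) (s : Vtx m n) :
    ∏ e ∈ starSet m n s, (∏ p ∈ A, xconf m n p) e = 1 := by
  obtain ⟨a, b⟩ := s
  rw [starSet, Finset.prod_image (star_injective hm hn _).injOn, Fin.prod_univ_four]
  simp only [star, Matrix.cons_val]
  rw [prod_xconf_horizontal hn, prod_xconf_vertical hm, prod_xconf_horizontal hn,
    prod_xconf_vertical hm]
  generalize (if ((a, b) : Vtx m n) ∈ A then (-1 : ℤˣ) else 1) = x₁
  generalize (if ((a, b - 1) : Vtx m n) ∈ A then (-1 : ℤˣ) else 1) = x₂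
  generalize (if ((a - 1, b) : Vtx m n) ∈ A then (-1 : ℤˣ) else 1) = x₃
  generalize (if ((a - 1, b - 1) : Vtx m n) ∈ A then (-1 : ℤˣ) else 1) = x₄
  rw [show x₁ * x₂ * (x₁ * x₃) * (x₃ * x₄) * (x₂ * x₄) =
    (x₁ * x₁) * (x₂ * x₂) * (x₃ * x₃) * (x₄ * x₄) by ac_rfl]
  simp only [Int.units_mul_self, mul_one]

variable [NeZero m] [NeZero n]

theorem prod_xconf_eq_one_iff (hm : 1 < m) (hn : 1 < n) (A : Finset (Vtx m n)) :
    ∏ p ∈ A, xconf m n p = 1 ↔ A = ∅ ∨ A = Finset.univ := by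
  constructor
  · intro h
    rw [or_iff_not_imp_left, ← Ne, ← Finset.nonempty_iff_ne_empty]
    refine fun hA => ZMod.eq_univ_of_forall_add_mem hA (fun ⟨a, b⟩ hv => ?_) (fun ⟨a, b⟩ hv => ?_)
    · have hv' := congrFun h ((a + 1, b), false)
      rw [Pi.one_apply, prod_xconf_vertical hm, ite_neg_one_mul_ite_neg_one_eq_one_iff] at hv'
      simpa using hv'.mpr (by simpa using hv)
    · have hv' := congrFun h ((a, b + 1), true)
      rw [Pi.one_apply, prod_xconf_horizontal hn, ite_neg_one_mul_ite_neg_one_eq_one_iff] at hv'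
      simpa using hv'.mpr (by simpa using hv)
  · rintro (rfl | rfl)
    · simp
    · funext ⟨⟨a, b⟩, o⟩
      cases o
      · simp [prod_xconf_vertical hm]
      · simp [prod_xconf_horizontal hn]

theorem prod_xconf_mul_prod_xconf_eq_one_iff (hm : 1 < m) (hn : 1 < n) (C A : Finset (Vtx m n)) :
    (∏ p ∈ C, xconf m n p) * ∏ p ∈ A, xconf m n p = 1 ↔ A = C ∨ A = Cᶜ := by
  rw [Finset.prod_mul_prod_eq_prod_symmDiff xconf_mul_self, prod_xconf_eq_one_iff hm hn,
    ← Finset.bot_eq_empty, ← Finset.top_eq_univ, symmDiff_eq_bot, symmDiff_eq_top,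
    eq_compl_iff_isCompl, isCompl_comm, eq_comm]

def starEnergy (Jz : Vtx m n → ℝ) (ω : SConf m n) : ℝ :=
  ∑ s : Vtx m n, Jz s * (((∏ e ∈ starSet m n s, ω e : ℤˣ) : ℤ) : ℝ)

theorem starEnergy_prod_xconf_mul (hm : 1 < m) (hn : 1 < n) (Jz : Vtx m n → ℝ)
    (A : Finset (Vtx m n)) (ω : SConf m n) :
    starEnergy Jz ((∏ p ∈ A, xconf m n p) * ω) = starEnergy Jz ω := by
  simp only [starEnergy, Pi.mul_apply, Finset.prod_mul_distrib, prod_starSet_prod_xconf hm hn,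
    one_mul]

theorem neg_H_eq (Jx Jz : Vtx m n → ℝ) :
    -H m n Jx Jz =
      ∑ p, Jx p • shiftMatrix ℝ (xconf m n p) + Matrix.diagonal (starEnergy Jz) := by
  have hZ : ∑ s, Jz s • Z m n s = Matrix.diagonal (starEnergy Jz) := by
    ext τ ω
    by_cases h : τ = ω
    · simp [Z, starEnergy, Matrix.sum_apply, h]
    · simp [Z, Matrix.sum_apply, h]
  rw [H, neg_sub, sub_neg_eq_add, add_comm, hZ]
  rfl

theorem mexp_neg_H (hm : 1 < m) (hn : 1 < n) (Jx Jz : Vtx m n → ℝ) :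
    mexp m n (-H m n Jx Jz) =
      (∑ A ∈ Finset.univ.powerset,
        ((∏ p ∈ A, Real.sinh (Jx p)) * ∏ p ∈ Finset.univ \ A, Real.cosh (Jx p)) •
          shiftMatrix ℝ (∏ p ∈ A, xconf m n p)) *
        Matrix.diagonal fun ω => Real.exp (starEnergy Jz ω) := by
  have hcomm : Commute (∑ p, Jx p • shiftMatrix ℝ (xconf m n p))
      (Matrix.diagonal (starEnergy Jz)) :=
    Commute.sum_left _ _ _ fun p _ => (commute_shiftMatrix_diagonal fun ω => by
      simpa using starEnergy_prod_xconf_mul hm hn Jz {p} ω).smul_left _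
  rw [mexp, neg_H_eq, Matrix.exp_add_of_commute _ _ hcomm,
    exp_sum_smul_shiftMatrix xconf_mul_self, Matrix.exp_diagonal, Pi.exp_def,
    ← Real.exp_eq_exp_ℝ]

theorem trace_XProd_mul_mexp_neg_H (hm : 1 < m) (hn : 1 < n) (Jx Jz : Vtx m n → ℝ)
    (C : Finset (Vtx m n)) :
    (XProd m n C * mexp m n (-H m n Jx Jz)).trace =
      ((∏ p ∈ Cᶜ, Real.cosh (Jx p)) * (∏ p ∈ C, Real.sinh (Jx p)) +
        (∏ p ∈ Cᶜ, Real.sinh (Jx p)) * (∏ p ∈ C, Real.cosh (Jx p))) *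
      ∑ ω, Real.exp (starEnergy Jz ω) := by
  change (shiftMatrix ℝ (∏ p ∈ C, xconf m n p) * _).trace = _
  simp only [mexp_neg_H hm hn, Matrix.sum_mul, Matrix.mul_sum, Matrix.smul_mul, Matrix.mul_smul,
    ← Matrix.mul_assoc, shiftMatrix_mul, Matrix.trace_sum, Matrix.trace_smul,
    trace_shiftMatrix_mul_diagonal, prod_xconf_mul_prod_xconf_eq_one_iff hm hn, smul_eq_mul,
    mul_ite, mul_zero]
  have hterms : Finset.univ.powerset.filter (fun A => A = C ∨ A = Cᶜ) = {C, Cᶜ} := by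
    ext A
    simp
  rw [← Finset.sum_filter, hterms, Finset.sum_pair ne_compl_self, ← Finset.compl_eq_univ_sdiff,
    ← Finset.compl_eq_univ_sdiff, compl_compl]
  ring

end Toric

theorem toric_code_X_correlation_general (m n : ℕ) [NeZero m] [NeZero n]
    (hm : 3 ≤ m) (hn : 3 ≤ n)
    (Jx Jz : Toric.Vtx m n → ℝ) (hJx : ∀ p, 0 ≤ Jx p)
    (C : Finset (Toric.Vtx m n)) :
    Toric.gibbs m n Jx Jz (Toric.XProd m n C) =
      ((∏ p ∈ Cᶜ, Real.cosh (Jx p)) * (∏ p ∈ C, Real.sinh (Jx p)) +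
        (∏ p ∈ Cᶜ, Real.sinh (Jx p)) * (∏ p ∈ C, Real.cosh (Jx p))) /
      ((∏ p : Toric.Vtx m n, Real.cosh (Jx p)) +
        ∏ p : Toric.Vtx m n, Real.sinh (Jx p)) ∧
    0 ≤ Toric.gibbs m n Jx Jz (Toric.XProd m n C) := by
  open Toric in
  have hm : 1 < m := by omega
  have hn : 1 < n := by omega
  have hZ : 0 < ∑ ω, Real.exp (starEnergy Jz ω) :=
    Finset.sum_pos (fun _ _ => Real.exp_pos _) Finset.univ_nonempty
  have htrace : (mexp m n (-H m n Jx Jz)).trace =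
      ((∏ p, Real.cosh (Jx p)) + ∏ p, Real.sinh (Jx p)) * ∑ ω, Real.exp (starEnergy Jz ω) := by
    have hXProd : XProd m n ∅ = 1 := shiftMatrix_one
    simpa [hXProd] using trace_XProd_mul_mexp_neg_H hm hn Jx Jz ∅
  rw [gibbs, trace_XProd_mul_mexp_neg_H hm hn, htrace, mul_div_mul_right _ _ hZ.ne']
  have hsinh (A : Finset (Vtx m n)) : 0 ≤ ∏ p ∈ A, Real.sinh (Jx p) :=
    Finset.prod_nonneg fun p _ => Real.sinh_nonneg_iff.mpr (hJx p)
  have hcosh (A : Finset (Vtx m n)) : 0 ≤ ∏ p ∈ A, Real.cosh (Jx p) :=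
    Finset.prod_nonneg fun p _ => (Real.cosh_pos _).le
  exact ⟨rfl, by bound⟩

/-- For `C ⊆ F`,
`⟨∏_{p∈C} X_p⟩ = (∏_{p∉C} cosh(Jˣ_p) ∏_{p∈C} sinh(Jˣ_p) + ∏_{p∉C} sinh(Jˣ_p)
∏_{p∈C} cosh(Jˣ_p)) / (∏_p cosh(Jˣ_p) + ∏_p sinh(Jˣ_p))`; in particular it is
nonnegative. -/
theorem toric_code_X_correlation (m n : ℕ) [NeZero m] [NeZero n]
    (hm : 3 ≤ m) (hn : 3 ≤ n)
    (Jx Jz : Toric.Vtx m n → ℝ) (hJx : ∀ p, 0 ≤ Jx p) (hJz : ∀ s, 0 ≤ Jz s)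
    (C : Finset (Toric.Vtx m n)) :
    Toric.gibbs m n Jx Jz (Toric.XProd m n C) =
      ((∏ p ∈ Cᶜ, Real.cosh (Jx p)) * (∏ p ∈ C, Real.sinh (Jx p)) +
        (∏ p ∈ Cᶜ, Real.sinh (Jx p)) * (∏ p ∈ C, Real.cosh (Jx p))) /
      ((∏ p : Toric.Vtx m n, Real.cosh (Jx p)) +
        ∏ p : Toric.Vtx m n, Real.sinh (Jx p)) ∧
    0 ≤ Toric.gibbs m n Jx Jz (Toric.XProd m n C) :=
  toric_code_X_correlation_general m n hm hn Jx Jz hJx C
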